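/- arXiv:2308.09696 — 3 statements merged into one kernel-verified Lean document; each statement's English description precedes it below -/
import Mathlib

section
/- For n ≥ 3, every vertex of the inclusion graph G_n on nonempty proper subsets of {1,...,n} is mutually maximally distant from some other vertex; specifically, every vertex A is mutually maximally distant from its complement A^c. Hence the strong resolving graph of G_n has the same vertex set as G_n. -/
open SimpleGraph Finset

variable {V : Type*}

/-- A set of vertices is resolving if distance vectors to it distinguish vertices. -/
def IsResolving (G : SimpleGraph V) (S : Set V) : Prop :=
  ∀ u v : V, (∀ w ∈ S, G.dist u w = G.dist v w) → u = v

/-- The metric dimension: the least size of a (finite) resolving set. -/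
noncomputable def metricDim (G : SimpleGraph V) : ℕ :=
  sInf {k | ∃ S : Finset V, S.card = k ∧ IsResolving G ↑S}

/-- Two vertices are mutually maximally distant. -/
def MMD (G : SimpleGraph V) (u v : V) : Prop :=
  u ≠ v ∧ (∀ w, G.Adj u w → G.dist v w ≤ G.dist u v) ∧
    (∀ w, G.Adj v w → G.dist u w ≤ G.dist u v)

/-- The strong resolving graph: edges between mutually maximally distant vertices. -/
def strongResolvingGraph (G : SimpleGraph V) : SimpleGraph V where
  Adj u v := MMD G u v
  symm := ⟨by
    rintro u v ⟨hne, h1, h2⟩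
    refine ⟨hne.symm, ?_, ?_⟩
    · intro w hw
      rw [SimpleGraph.dist_comm (u := v) (v := u)]
      exact h2 w hw
    · intro w hw
      rw [SimpleGraph.dist_comm (u := v) (v := u)]
      exact h1 w hw⟩
  loopless := ⟨fun v h => h.1 rfl⟩

/-- A set strongly resolving a graph. -/
def IsStrongResolving (G : SimpleGraph V) (S : Set V) : Prop :=
  ∀ u v : V, u ≠ v → ∃ w ∈ S,
    G.dist w u = G.dist w v + G.dist v u ∨ G.dist w v = G.dist w u + G.dist u v

/-- Strong metric dimension. -/
noncomputable def sdim (G : SimpleGraph V) : ℕ :=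
  sInf {k | ∃ S : Finset V, S.card = k ∧ IsStrongResolving G ↑S}

/-- An independent set of vertices. -/
def IsIndepFinset (G : SimpleGraph V) (S : Finset V) : Prop :=
  ∀ u ∈ S, ∀ v ∈ S, u ≠ v → ¬ G.Adj u v

/-- Independence number. -/
noncomputable def indepNum (G : SimpleGraph V) : ℕ :=
  sSup {k | ∃ S : Finset V, S.card = k ∧ IsIndepFinset G S}

/-- Vertices of the inclusion graph on `{1,...,n}`: nonempty proper subsets. -/
def SubVert (n : ℕ) := {A : Finset (Fin n) // A.Nonempty ∧ A ≠ Finset.univ}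

/-- The inclusion graph on nonempty proper subsets of `{1,...,n}`. -/
def inclGraph (n : ℕ) : SimpleGraph (SubVert n) where
  Adj A B := A.1 ⊂ B.1 ∨ B.1 ⊂ A.1
  symm := ⟨fun _ _ h => h.symm⟩
  loopless := ⟨fun A h => by
    rcases h with h | h <;> exact (ssubset_irrefl A.1) h⟩

/-- Complement of a vertex of the inclusion graph. -/
def complVert {n : ℕ} (A : SubVert n) : SubVert n :=
  ⟨A.1ᶜ,
    Finset.nonempty_iff_ne_empty.mpr fun h => A.2.2 (by simpa using h),
    fun h => (Finset.nonempty_iff_ne_empty.mp A.2.1) (by simpa using h)⟩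

/-- Vertices of the inclusion ideal graph of a product of chain rings:
tuples in a product of chains, excluding bottom and top. -/
def ChainVert {m : ℕ} (d : Fin m → ℕ) := {v : ∀ i, Fin (d i + 2) // v ≠ ⊥ ∧ v ≠ ⊤}

/-- The inclusion graph on a product of chains (minus bottom and top),
modelling the inclusion ideal graph of a product of principal ideal rings. -/
def chainGraph {m : ℕ} (d : Fin m → ℕ) : SimpleGraph (ChainVert d) where
  Adj I J := I.1 < J.1 ∨ J.1 < I.1
  symm := ⟨fun _ _ h => h.symm⟩
  loopless := ⟨fun I h => by rcases h with h | h <;> exact lt_irrefl _ h⟩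

/-
The graph has diameter at most 3: two subsets that meet are joined through their intersection,
two subsets that do not cover `{1,...,n}` through their union, and in the remaining case `B = Aᶜ`
one of them, say `A`, has two points `a ≠ a'` (as `n ≥ 3`), and `A ⊇ {a} ⊆ {a} ∪ B ⊇ B` is a path since
`a' ∉ {a} ∪ B`. On the other hand `A` and `Aᶜ` are neither equal, nor comparable, nor have a
common neighbour, so `d(A, Aᶜ) = 3` is the diameter, and a pair of vertices realizing the
diameter is mutually maximally distant.
-/

lemma MMD.of_forall_dist_le {V : Type*} {G : SimpleGraph V} {u v : V} (hne : u ≠ v)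
    (h : ∀ x y, G.dist x y ≤ G.dist u v) : MMD G u v :=
  ⟨hne, fun w _ => h v w, fun w _ => h u w⟩

namespace inclGraph

variable {n : ℕ}

lemma edist_le_one_of_subset {A B : SubVert n} (h : A.1 ⊆ B.1) :
    (inclGraph n).edist A B ≤ 1 := by
  rw [edist_le_one_iff_adj_or_eq]
  by_cases hAB : A = B
  · exact Or.inr hAB
  · exact Or.inl (Or.inl (h.ssubset_of_ne fun h' => hAB (Subtype.ext h')))

lemma edist_le_two_of_subset_of_subset {A B C : SubVert n} (hA : A.1 ⊆ C.1) (hB : B.1 ⊆ C.1) :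
    (inclGraph n).edist A B ≤ 2 :=
  calc (inclGraph n).edist A B ≤ (inclGraph n).edist A C + (inclGraph n).edist C B :=
        (inclGraph n).edist_triangle
    _ ≤ 1 + 1 :=
        add_le_add (edist_le_one_of_subset hA)
          (SimpleGraph.edist_comm ▸ edist_le_one_of_subset hB)
    _ = 2 := one_add_one_eq_two

lemma edist_le_two_of_superset_of_superset {A B C : SubVert n} (hA : C.1 ⊆ A.1)
    (hB : C.1 ⊆ B.1) : (inclGraph n).edist A B ≤ 2 :=
  calc (inclGraph n).edist A B ≤ (inclGraph n).edist A C + (inclGraph n).edist C B :=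
        (inclGraph n).edist_triangle
    _ ≤ 1 + 1 :=
        add_le_add (SimpleGraph.edist_comm ▸ edist_le_one_of_subset hA)
          (edist_le_one_of_subset hB)
    _ = 2 := one_add_one_eq_two

lemma edist_le_two_of_inter_nonempty {A B : SubVert n} (h : (A.1 ∩ B.1).Nonempty) :
    (inclGraph n).edist A B ≤ 2 :=
  edist_le_two_of_superset_of_superset
    (C := ⟨A.1 ∩ B.1, h, (inter_subset_left.trans_ssubset (ssubset_univ_iff.mpr A.2.2)).ne⟩)
    inter_subset_left inter_subset_right

lemma edist_le_two_of_union_ne_univ {A B : SubVert n} (h : A.1 ∪ B.1 ≠ univ) :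
    (inclGraph n).edist A B ≤ 2 :=
  edist_le_two_of_subset_of_subset (C := ⟨A.1 ∪ B.1, A.2.1.mono subset_union_left, h⟩)
    subset_union_left subset_union_right

lemma edist_le_three_of_disjoint {A B : SubVert n} (hA : 1 < #A.1) (hAB : Disjoint A.1 B.1) :
    (inclGraph n).edist A B ≤ 3 := by
  obtain ⟨a, ha, a', ha', hne⟩ := one_lt_card.mp hA
  have hSB : {a} ∪ B.1 ≠ univ := fun h => by
    have : a' ∈ {a} ∪ B.1 := h.symm.subset (mem_univ a')
    simp [Ne.symm hne, disjoint_left.mp hAB ha'] at this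
  let S : SubVert n := ⟨{a}, singleton_nonempty a,
    (subset_union_left.trans_ssubset (ssubset_univ_iff.mpr hSB)).ne⟩
  calc (inclGraph n).edist A B ≤ (inclGraph n).edist A S + (inclGraph n).edist S B :=
        (inclGraph n).edist_triangle
    _ ≤ 1 + 2 :=
        add_le_add (SimpleGraph.edist_comm ▸ edist_le_one_of_subset (singleton_subset_iff.mpr ha))
          (edist_le_two_of_union_ne_univ hSB)
    _ = 3 := by norm_num

lemma edist_le_three (hn : 3 ≤ n) (A B : SubVert n) : (inclGraph n).edist A B ≤ 3 := by
  by_cases hI : (A.1 ∩ B.1).Nonempty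
  · exact (edist_le_two_of_inter_nonempty hI).trans (by norm_num)
  by_cases hU : A.1 ∪ B.1 = univ
  · have hAB : Disjoint A.1 B.1 :=
      disjoint_iff_inter_eq_empty.mpr (not_nonempty_iff_eq_empty.mp hI)
    have hcard : #A.1 + #B.1 = n := by
      rw [← card_union_of_disjoint hAB, hU, card_univ, Fintype.card_fin]
    rcases lt_or_ge 1 #A.1 with hA | hA
    · exact edist_le_three_of_disjoint hA hAB
    · exact SimpleGraph.edist_comm ▸ edist_le_three_of_disjoint (by omega) hAB.symm
  · exact (edist_le_two_of_union_ne_univ hU).trans (by norm_num)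

lemma dist_le_three (hn : 3 ≤ n) (A B : SubVert n) : (inclGraph n).dist A B ≤ 3 :=
  ENat.toNat_le_of_le_natCast (edist_le_three hn A B)

lemma not_subset_compl (A : SubVert n) : ¬ A.1 ⊆ A.1ᶜ := fun h =>
  A.2.1.ne_empty (le_compl_self.mp h)

lemma not_compl_subset (A : SubVert n) : ¬ A.1ᶜ ⊆ A.1 := fun h =>
  A.2.2 (compl_le_self.mp h)

lemma ne_complVert (A : SubVert n) : A ≠ complVert A := fun h =>
  not_subset_compl A (congrArg Subtype.val h).subset

lemma not_adj_complVert (A : SubVert n) : ¬ (inclGraph n).Adj A (complVert A) := by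
  rintro (h | h)
  · exact not_subset_compl A h.subset
  · exact not_compl_subset A h.subset

lemma commonNeighbors_complVert (A : SubVert n) :
    (inclGraph n).commonNeighbors A (complVert A) = ∅ := by
  refine Set.eq_empty_of_forall_notMem fun C hC => ?_
  obtain ⟨hA, hAc⟩ := (mem_commonNeighbors _).mp hC
  rcases hA with hA | hA <;> rcases hAc with hAc | hAc
  · exact C.2.2 (univ_subset_iff.mp
      ((union_compl A.1).symm.subset.trans (union_subset hA.subset hAc.subset)))
  · exact not_subset_compl A (hA.subset.trans hAc.subset)
  · exact not_compl_subset A (hAc.subset.trans hA.subset)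
  · exact C.2.1.ne_empty (subset_empty.mp
      ((subset_inter hA.subset hAc.subset).trans (inter_compl A.1).subset))

lemma dist_complVert (hn : 3 ≤ n) (A : SubVert n) : (inclGraph n).dist A (complVert A) = 3 := by
  have h3 : (inclGraph n).edist A (complVert A) = 3 :=
    le_antisymm (edist_le_three hn A _) (Order.add_one_le_of_lt (two_lt_edist_iff.mpr
      ⟨ne_complVert A, not_adj_complVert A, commonNeighbors_complVert A⟩))
  rw [SimpleGraph.dist, h3]
  rfl

end inclGraph

theorem stmt8 (n : ℕ) (hn : 3 ≤ n) :
    (∀ A : SubVert n, MMD (inclGraph n) A (complVert A)) ∧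
      (∀ A : SubVert n, ∃ B : SubVert n, MMD (inclGraph n) A B) := by
  have hcompl : ∀ A : SubVert n, MMD (inclGraph n) A (complVert A) := fun A =>
    MMD.of_forall_dist_le (inclGraph.ne_complVert A) fun x y =>
      inclGraph.dist_complVert hn A ▸ inclGraph.dist_le_three hn x y
  exact ⟨hcompl, fun A => ⟨complVert A, hcompl A⟩⟩
end

section
/- For n ≥ 3, in the strong resolving graph of the inclusion graph G_n on nonempty proper subsets of {1,...,n}, each singleton {i} is adjacent only to its complement {1,...,n}\{i}, and each subset of size n−1 is adjacent only to its complementary singleton. Hence the strong resolving graph contains n connected components each isomorphic to K_2, one for each pair ({i}, {i}^c). -/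
open SimpleGraph Finset

variable {V : Type*}

/-! Two vertices `A`, `B` of the inclusion graph that are not complementary are at distance at
most `2`, through `A ∪ B` or `A ∩ B`, whereas `A` and `Aᶜ` have no common neighbour; so the graph
has diameter `3`, attained exactly at complementary pairs, and `A`, `Aᶜ` are mutually maximally
distant. Let `A = {a}` and `B` be mutually maximally distant. If `a ∈ B`, then `d(A, B) = 1` but
the neighbour `{a, b}` of `A`, for `b ∉ B`, is at distance `2` from `B`. If `a ∉ B`, then `Bᶜ ⊇ A`
and, unless `B = Aᶜ`, `Bᶜ` is a neighbour of `A` at distance `3` from `B`, while `d(A, B) ≤ 2`.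
Complementation is a graph automorphism, which carries this over to sets of size `n - 1`. -/

namespace SimpleGraph

variable {V W : Type*} {G : SimpleGraph V} {G' : SimpleGraph W}

lemma Iso.edist_map_le (e : G ≃g G') (u v : V) : G'.edist (e u) (e v) ≤ G.edist u v :=
  le_iInf fun p => (p.map e.toHom).edist_le.trans_eq (by rw [Walk.length_map])

lemma Iso.edist_map (e : G ≃g G') (u v : V) : G'.edist (e u) (e v) = G.edist u v :=
  le_antisymm (e.edist_map_le u v) (by simpa using e.symm.edist_map_le (e u) (e v))

lemma Iso.dist_map (e : G ≃g G') (u v : V) : G'.dist (e u) (e v) = G.dist u v := by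
  rw [dist, dist, e.edist_map]

lemma supp_connectedComponentMk_eq_pair {u v : V} (hu : ∀ w, G.Adj u w ↔ w = v)
    (hv : ∀ w, G.Adj v w ↔ w = u) : (G.connectedComponentMk u).supp = {u, v} := by
  have closed : ∀ {x y}, G.Reachable x y → x = u ∨ x = v → y = u ∨ y = v := by
    rintro x y ⟨p⟩
    induction p with
    | nil => exact id
    | cons h _ ih =>
      rintro (rfl | rfl)
      exacts [ih (Or.inr ((hu _).1 h)), ih (Or.inl ((hv _).1 h))]
  ext x
  rw [ConnectedComponent.mem_supp_iff, ConnectedComponent.eq, Set.mem_insert_iff,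
    Set.mem_singleton_iff]
  refine ⟨fun h => closed h.symm (Or.inl rfl), ?_⟩
  rintro (rfl | rfl)
  exacts [Reachable.refl _, ((hu _).2 rfl).symm.reachable]

end SimpleGraph

lemma MMD.map {V W : Type*} {G : SimpleGraph V} {G' : SimpleGraph W} (e : G ≃g G') {u v : V}
    (h : MMD G u v) : MMD G' (e u) (e v) := by
  obtain ⟨hne, hu, hv⟩ := h
  refine ⟨e.injective.ne hne, fun w hw => ?_, fun w hw => ?_⟩ <;>
  obtain ⟨w, rfl⟩ := e.surjective w <;>
  simp only [e.dist_map, e.map_adj_iff] at hw ⊢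
  exacts [hu w hw, hv w hw]

section InclusionGraph

variable {n : ℕ} {A B C : SubVert n}

lemma SubVert.ne_univ_of_subset {s : Finset (Fin n)} (h : s ⊆ A.1) : s ≠ univ :=
  fun hs => A.2.2 (univ_subset_iff.1 (hs ▸ h))

lemma SubVert.exists_notMem (A : SubVert n) : ∃ b, b ∉ A.1 :=
  not_forall.1 fun h => A.2.2 (eq_univ_of_forall h)

lemma complVert_val (A : SubVert n) : (complVert A).1 = A.1ᶜ := rfl

lemma eq_complVert_iff : B = complVert A ↔ B.1 = A.1ᶜ := Subtype.ext_iff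

lemma complVert_complVert (A : SubVert n) : complVert (complVert A) = A :=
  Subtype.ext (compl_compl _)

lemma complVert_injective : Function.Injective (complVert (n := n)) :=
  Function.LeftInverse.injective complVert_complVert

lemma complVert_ne (A : SubVert n) : complVert A ≠ A := by
  obtain ⟨a, ha⟩ := A.2.1
  intro h
  exact mem_compl.1 (h.symm ▸ ha : a ∈ (complVert A).1) ha

def complIso (n : ℕ) : inclGraph n ≃g inclGraph n where
  toEquiv := Function.Involutive.toPerm complVert complVert_complVert
  map_rel_iff' {A B} := by
    change A.1ᶜ ⊂ B.1ᶜ ∨ B.1ᶜ ⊂ A.1ᶜ ↔ A.1 ⊂ B.1 ∨ B.1 ⊂ A.1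
    rw [compl_ssubset_compl, compl_ssubset_compl, or_comm]

@[simp]
lemma complIso_apply (A : SubVert n) : complIso n A = complVert A := rfl

lemma inclGraph_dist_le_one_of_subset (h : A.1 ⊆ B.1) : (inclGraph n).dist A B ≤ 1 := by
  rcases h.eq_or_ssubset with h | h
  · rw [Subtype.ext h, dist_self]
    exact zero_le_one
  · exact (dist_eq_one_iff_adj.2 (Or.inl h)).le

lemma inclGraph_reachable_of_subset (h : A.1 ⊆ B.1) : (inclGraph n).Reachable A B := by
  rcases h.eq_or_ssubset with h | h
  · rw [Subtype.ext h]
  · exact Adj.reachable (Or.inl h)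

def SubVert.ofCardLt (s : Finset (Fin n)) (hs : s.Nonempty) (hlt : s.card < n) : SubVert n :=
  ⟨s, hs, fun h => by simp [h] at hlt⟩

lemma inclGraph_connected (hn : 3 ≤ n) : (inclGraph n).Connected := by
  let single (a : Fin n) : SubVert n := .ofCardLt {a} (singleton_nonempty a) (by simp; omega)
  let pair (a b : Fin n) : SubVert n :=
    .ofCardLt {b, a} (insert_nonempty b {a}) (card_le_two.trans_lt (by omega))
  have : Nonempty (SubVert n) := ⟨single ⟨0, by omega⟩⟩
  refine ⟨fun A B => ?_⟩
  obtain ⟨a, ha⟩ := A.2.1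
  obtain ⟨b, hb⟩ := B.2.1
  have hA : (inclGraph n).Reachable (single a) A :=
    inclGraph_reachable_of_subset (singleton_subset_iff.2 ha)
  have hB : (inclGraph n).Reachable (single b) B :=
    inclGraph_reachable_of_subset (singleton_subset_iff.2 hb)
  have hab : (inclGraph n).Reachable (single a) (pair a b) :=
    inclGraph_reachable_of_subset (subset_insert b {a})
  have hba : (inclGraph n).Reachable (single b) (pair a b) :=
    inclGraph_reachable_of_subset (singleton_subset_iff.2 (mem_insert_self b {a}))
  exact hA.symm.trans (hab.trans (hba.symm.trans hB))

lemma inclGraph_dist_le_two_of_subset_of_subset (hn : 3 ≤ n) (hA : A.1 ⊆ C.1)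
    (hB : B.1 ⊆ C.1) :
    (inclGraph n).dist A B ≤ 2 :=
  calc (inclGraph n).dist A B ≤ (inclGraph n).dist A C + (inclGraph n).dist C B :=
        (inclGraph_connected hn).dist_triangle
    _ ≤ 1 + 1 := add_le_add (inclGraph_dist_le_one_of_subset hA)
        (dist_comm.trans_le (inclGraph_dist_le_one_of_subset hB))

lemma inclGraph_dist_le_two_of_superset_of_superset (hn : 3 ≤ n) (hA : C.1 ⊆ A.1)
    (hB : C.1 ⊆ B.1) :
    (inclGraph n).dist A B ≤ 2 :=
  calc (inclGraph n).dist A B ≤ (inclGraph n).dist A C + (inclGraph n).dist C B :=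
        (inclGraph_connected hn).dist_triangle
    _ ≤ 1 + 1 := add_le_add (dist_comm.trans_le (inclGraph_dist_le_one_of_subset hA))
        (inclGraph_dist_le_one_of_subset hB)

lemma inclGraph_dist_le_two_of_ne_complVert (hn : 3 ≤ n) (h : B ≠ complVert A) :
    (inclGraph n).dist A B ≤ 2 := by
  by_cases hu : A.1 ∪ B.1 = univ
  · by_cases hi : (A.1 ∩ B.1).Nonempty
    · exact inclGraph_dist_le_two_of_superset_of_superset hn
        (C := ⟨A.1 ∩ B.1, hi, SubVert.ne_univ_of_subset inter_subset_left⟩)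
        inter_subset_left inter_subset_right
    · refine absurd (eq_complVert_iff.2 (eq_compl_iff_isCompl.2 ⟨?_, ?_⟩)) h
      · rwa [disjoint_comm, disjoint_iff_inter_eq_empty, ← not_nonempty_iff_eq_empty]
      · rwa [codisjoint_comm, codisjoint_iff]
  · exact inclGraph_dist_le_two_of_subset_of_subset hn
      (C := ⟨A.1 ∪ B.1, A.2.1.mono subset_union_left, hu⟩) subset_union_left subset_union_right

lemma inclGraph_dist_complVert_le_three_of_ssubset (hn : 3 ≤ n) (h : C.1 ⊂ A.1) :
    (inclGraph n).dist A (complVert A) ≤ 3 :=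
  calc (inclGraph n).dist A (complVert A)
      ≤ (inclGraph n).dist A C + (inclGraph n).dist C (complVert A) :=
        (inclGraph_connected hn).dist_triangle
    _ ≤ 1 + 2 := add_le_add (dist_comm.trans_le (inclGraph_dist_le_one_of_subset h.subset))
        (inclGraph_dist_le_two_of_ne_complVert hn
          fun e => h.ne (congrArg Subtype.val (complVert_injective e).symm))

lemma SubVert.exists_ssubset_of_one_lt_card (h : 1 < A.1.card) :
    ∃ C : SubVert n, C.1 ⊂ A.1 := by
  obtain ⟨a, ha⟩ := A.2.1
  have hsub : {a} ⊆ A.1 := singleton_subset_iff.2 ha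
  refine ⟨⟨{a}, singleton_nonempty a, SubVert.ne_univ_of_subset hsub⟩, hsub.ssubset_of_ne ?_⟩
  intro e
  rw [← e, card_singleton] at h
  exact h.false

lemma inclGraph_dist_complVert_le_three (hn : 3 ≤ n) (A : SubVert n) :
    (inclGraph n).dist A (complVert A) ≤ 3 := by
  have hcard : A.1.card + (complVert A).1.card = n := by
    rw [complVert_val, card_add_card_compl, Fintype.card_fin]
  rcases lt_or_ge 1 A.1.card with hA | hA
  · obtain ⟨C, hC⟩ := SubVert.exists_ssubset_of_one_lt_card hA
    exact inclGraph_dist_complVert_le_three_of_ssubset hn hC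
  · obtain ⟨C, hC⟩ := SubVert.exists_ssubset_of_one_lt_card (A := complVert A) (by omega)
    simpa [SimpleGraph.dist_comm, complVert_complVert] using
      inclGraph_dist_complVert_le_three_of_ssubset hn hC

lemma inclGraph_dist_le_three (hn : 3 ≤ n) (A B : SubVert n) : (inclGraph n).dist A B ≤ 3 := by
  rcases eq_or_ne B (complVert A) with rfl | hB
  · exact inclGraph_dist_complVert_le_three hn A
  · exact (inclGraph_dist_le_two_of_ne_complVert hn hB).trans (by norm_num)

lemma inclGraph_not_adj_complVert (A : SubVert n) : ¬ (inclGraph n).Adj A (complVert A) := by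
  rintro (h | h)
  · exact A.2.1.ne_empty (le_compl_self.1 h.subset)
  · exact A.2.2 (compl_le_self.1 h.subset)

lemma inclGraph_not_adj_of_adj_complVert (hA : (inclGraph n).Adj A C) :
    ¬ (inclGraph n).Adj (complVert A) C := by
  rintro (hc | hc) <;> rcases hA with h | h
  · exact C.2.2 (univ_subset_iff.1
      ((union_compl A.1).symm.trans_subset (union_subset h.subset hc.subset)))
  · exact inclGraph_not_adj_complVert A (Or.inr (hc.trans h))
  · exact inclGraph_not_adj_complVert A (Or.inl (h.trans hc))
  · exact C.2.1.ne_empty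
      (subset_empty.1 ((subset_inter h.subset hc.subset).trans_eq (inter_compl A.1)))

lemma inclGraph_dist_complVert (hn : 3 ≤ n) (A : SubVert n) :
    (inclGraph n).dist A (complVert A) = 3 := by
  refine le_antisymm (inclGraph_dist_complVert_le_three hn A) ?_
  have hlt : 2 < (inclGraph n).edist A (complVert A) := by
    refine two_lt_edist_iff.2 ⟨(complVert_ne A).symm, inclGraph_not_adj_complVert A, ?_⟩
    refine Set.eq_empty_iff_forall_notMem.2 fun C hC => ?_
    rw [mem_commonNeighbors] at hC
    exact inclGraph_not_adj_of_adj_complVert hC.1 hC.2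
  rw [← (inclGraph_connected hn A _).coe_dist_eq_edist] at hlt
  exact_mod_cast hlt

lemma mmd_complVert (hn : 3 ≤ n) (A : SubVert n) : MMD (inclGraph n) A (complVert A) := by
  refine ⟨(complVert_ne A).symm, fun w _ => ?_, fun w _ => ?_⟩ <;>
  rw [inclGraph_dist_complVert hn] <;>
  exact inclGraph_dist_le_three hn _ _

lemma eq_complVert_of_mmd_of_adj_complVert (hn : 3 ≤ n) (h : MMD (inclGraph n) A B)
    (hadj : (inclGraph n).Adj A (complVert B)) : B = complVert A := by
  by_contra hB
  have hle := h.2.1 _ hadj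
  rw [inclGraph_dist_complVert hn] at hle
  have := inclGraph_dist_le_two_of_ne_complVert hn hB
  omega

lemma eq_complVert_of_mmd_of_card_eq_one (hn : 3 ≤ n) (hA : A.1.card = 1)
    (h : MMD (inclGraph n) A B) : B = complVert A := by
  obtain ⟨a, ha⟩ := card_eq_one.1 hA
  by_cases haB : a ∈ B.1
  · exfalso
    have hAB : A.1 ⊂ B.1 :=
      (ha ▸ singleton_subset_iff.2 haB).ssubset_of_ne fun e => h.1 (Subtype.ext e)
    obtain ⟨b, hb⟩ := B.exists_notMem
    have hba : b ≠ a := fun e => hb (e ▸ haB)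
    let W : SubVert n :=
      .ofCardLt {b, a} (insert_nonempty b {a}) (card_le_two.trans_lt (by omega))
    have hAW : (inclGraph n).Adj A W := by
      refine Or.inl ?_
      rw [ha]
      exact ssubset_insert (mem_singleton.not.2 hba)
    have hBW : W ≠ B := fun e => hb (e ▸ (by simp [W, SubVert.ofCardLt]))
    have hnadj : ¬ (inclGraph n).Adj B W := by
      rintro (h' | h')
      · refine not_subset_of_ssubset hAB (ha ▸ fun x hx => ?_)
        have hxW := h'.subset hx
        simp only [W, SubVert.ofCardLt, mem_insert, mem_singleton] at hxW
        rcases hxW with rfl | rfl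
        exacts [absurd hx hb, mem_singleton_self x]
      · exact hb (h'.subset (by simp [W, SubVert.ofCardLt]))
    have hle := h.2.1 W hAW
    have hdAB : (inclGraph n).dist A B = 1 := dist_eq_one_iff_adj.2 (Or.inl hAB)
    rw [hdAB] at hle
    have := (inclGraph_connected hn).one_lt_dist_of_ne_of_not_adj hBW.symm hnadj
    omega
  · have hsub : A.1 ⊆ B.1ᶜ := ha ▸ singleton_subset_iff.2 (mem_compl.2 haB)
    rcases hsub.eq_or_ssubset with e | hlt
    · exact eq_complVert_iff.2 (eq_compl_comm.1 e)
    · exact eq_complVert_of_mmd_of_adj_complVert hn h (Or.inl hlt)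

lemma strongResolvingGraph_inclGraph_adj_iff_of_card_eq_one (hn : 3 ≤ n) (hA : A.1.card = 1)
    (B : SubVert n) : (strongResolvingGraph (inclGraph n)).Adj A B ↔ B = complVert A :=
  ⟨eq_complVert_of_mmd_of_card_eq_one hn hA, fun h => h ▸ mmd_complVert hn A⟩

lemma strongResolvingGraph_inclGraph_adj_iff_of_card_eq_sub_one (hn : 3 ≤ n)
    (hA : A.1.card = n - 1) (B : SubVert n) :
    (strongResolvingGraph (inclGraph n)).Adj A B ↔ B = complVert A := by
  refine ⟨fun h => complVert_injective ?_, fun h => h ▸ mmd_complVert hn A⟩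
  have hA' : (complVert A).1.card = 1 := by
    rw [complVert_val, card_compl, Fintype.card_fin, hA]
    omega
  simpa [complVert_complVert] using
    eq_complVert_of_mmd_of_card_eq_one hn hA' (h.map (complIso n))

end InclusionGraph

theorem stmt10 (n : ℕ) (hn : 3 ≤ n) :
    (∀ A : SubVert n, A.1.card = 1 →
      ∀ B : SubVert n, (strongResolvingGraph (inclGraph n)).Adj A B ↔ B = complVert A) ∧
    (∀ A : SubVert n, A.1.card = n - 1 →
      ∀ B : SubVert n, (strongResolvingGraph (inclGraph n)).Adj A B ↔ B = complVert A) ∧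
    (∀ A : SubVert n, A.1.card = 1 →
      ((strongResolvingGraph (inclGraph n)).connectedComponentMk A).supp
        = {A, complVert A}) := by
  refine ⟨fun A => strongResolvingGraph_inclGraph_adj_iff_of_card_eq_one hn,
    fun A => strongResolvingGraph_inclGraph_adj_iff_of_card_eq_sub_one hn, fun A hA => ?_⟩
  have hAc : (complVert A).1.card = n - 1 := by
    rw [complVert_val, card_compl, Fintype.card_fin, hA]
  refine supp_connectedComponentMk_eq_pair
    (strongResolvingGraph_inclGraph_adj_iff_of_card_eq_one hn hA) fun B => ?_
  rw [strongResolvingGraph_inclGraph_adj_iff_of_card_eq_sub_one hn hAc, complVert_complVert]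
end

section
/- For n ≥ 3, the strong metric dimension of the inclusion graph on nonempty proper subsets of an n-element set equals 2^n − 2n + 1. -/
open SimpleGraph Finset

variable {V : Type*}

/-!
In the inclusion graph comparable sets are adjacent, complementary sets are at distance 3 and
all other pairs at distance 2. A complementary pair, or a crossing pair (incomparable,
intersecting, not covering), can be strongly resolved only by one of its own members, so the
vertices outside a strong resolving set form a cross-free family without complementary pairs.
Complementing the members that contain a fixed point `a` turns it into a laminar family of
nonempty subsets of the remaining `n - 1` points, which has at most `2 * (n - 1) - 1` members.
Conversely, the vertices outside a laminar family avoiding `a` strongly resolve the graph: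
a nested pair `u ⊂ v` is resolved by `u ∪ {a}` and a disjoint pair `u, v` by `vᶜ`. Laminar
families of size `2 * (n - 1) - 1` exist, and `(2 ^ n - 2) - (2 * n - 3) = 2 ^ n - 2 * n + 1`.
-/

section Laminar

variable {α : Type*}

def IsLaminar (L : Finset (Finset α)) : Prop :=
  ∀ A ∈ L, ∀ B ∈ L, A ⊆ B ∨ B ⊆ A ∨ Disjoint A B

theorem IsLaminar.mono {L L' : Finset (Finset α)} (hL : IsLaminar L) (h : L' ⊆ L) :
    IsLaminar L' :=
  fun A hA B hB => hL A (h hA) B (h hB)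

variable [DecidableEq α]

/-- Splitting along a largest member `M ≠ s` gives the recursion `2 * #s - 1 = 1 + (2 * #M - 1) +
(2 * #(s \ M) - 1)`. -/
theorem IsLaminar.card_le {L : Finset (Finset α)} {s : Finset α} (hL : IsLaminar L)
    (hLs : ∀ A ∈ L, A.Nonempty ∧ A ⊆ s) : #L ≤ 2 * #s - 1 := by
  induction s using Finset.strongInduction generalizing L with
  | H s ih =>
  by_cases hproper : ∃ A ∈ L, A ≠ s
  · obtain ⟨M, hM, hMmax⟩ := (L.filter (· ≠ s)).exists_max_image card
      (by simpa [Finset.Nonempty] using hproper)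
    obtain ⟨hML, hMs⟩ := mem_filter.1 hM
    obtain ⟨hMne, hMsub⟩ := hLs M hML
    have hsplit : L ⊆ insert s (L.filter (· ⊆ M) ∪ L.filter (· ⊆ s \ M)) := by
      intro A hA
      rw [mem_insert, mem_union, mem_filter, mem_filter, subset_sdiff]
      by_cases hAs : A = s
      · exact Or.inl hAs
      obtain hAM | hMA | hdisj := hL A hA M hML
      · exact Or.inr (Or.inl ⟨hA, hAM⟩)
      · have hA_le := hMmax A (mem_filter.2 ⟨hA, hAs⟩)
        exact Or.inr (Or.inl ⟨hA, (eq_of_subset_of_card_le hMA hA_le).ge⟩)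
      · exact Or.inr (Or.inr ⟨hA, (hLs A hA).2, hdisj⟩)
    have hrestrict : ∀ t, ∀ A ∈ L.filter (· ⊆ t), A.Nonempty ∧ A ⊆ t := fun t A hA =>
      ⟨(hLs A (mem_filter.1 hA).1).1, (mem_filter.1 hA).2⟩
    have hM_le := ih M (ssubset_of_subset_of_ne hMsub hMs) (hL.mono (filter_subset _ _))
      (hrestrict M)
    have hsM_le := ih (s \ M) (sdiff_ssubset hMsub hMne) (hL.mono (filter_subset _ _))
      (hrestrict (s \ M))
    have hM_pos := hMne.card_pos
    have hM_lt := card_lt_card (ssubset_of_subset_of_ne hMsub hMs)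
    have hcard := card_sdiff_add_card_eq_card hMsub
    calc #L ≤ #(insert s (L.filter (· ⊆ M) ∪ L.filter (· ⊆ s \ M))) := card_le_card hsplit
      _ ≤ #(L.filter (· ⊆ M)) + #(L.filter (· ⊆ s \ M)) + 1 :=
          (card_insert_le _ _).trans (by grw [card_union_le])
      _ ≤ 2 * #s - 1 := by omega
  · push Not at hproper
    rcases L.eq_empty_or_nonempty with rfl | ⟨A, hA⟩
    · simp
    have hL_le : #L ≤ 1 := card_le_one.2 fun A hA B hB => (hproper A hA).trans (hproper B hB).symm
    have hs_pos : 0 < #s := ((hLs A hA).1.mono (hLs A hA).2).card_pos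
    omega

theorem IsLaminar.insert {L : Finset (Finset α)} {A : Finset α} (hL : IsLaminar L)
    (hA : ∀ B ∈ L, A ⊆ B ∨ B ⊆ A ∨ Disjoint A B) : IsLaminar (insert A L) := by
  intro B hB C hC
  rw [mem_insert] at hB hC
  rcases hB with rfl | hB <;> rcases hC with rfl | hC
  · exact Or.inl subset_rfl
  · exact hA C hC
  · rcases hA B hB with h | h | h
    exacts [Or.inr (Or.inl h), Or.inl h, Or.inr (Or.inr h.symm)]
  · exact hL B hB C hC

/-- Add `{a}` and `cons a t` to an extremal family on `t`. -/
theorem exists_isLaminar_card_eq {s : Finset α} (hs : s.Nonempty) :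
    ∃ L : Finset (Finset α),
      IsLaminar L ∧ (∀ A ∈ L, A.Nonempty ∧ A ⊆ s) ∧ #L = 2 * #s - 1 := by
  induction hs using Finset.Nonempty.cons_induction with
  | singleton a => exact ⟨{{a}}, by simp [IsLaminar], by simp, by simp⟩
  | cons a t hat ht ih =>
    obtain ⟨L, hL, hLt, hcard⟩ := ih
    have ha : ∀ B ∈ L, a ∉ B := fun B hB h => hat ((hLt B hB).2 h)
    refine ⟨insert (cons a t hat) (insert {a} L), ?_, ?_, ?_⟩
    · have hL' := hL.insert fun B hB => Or.inr (Or.inr (disjoint_singleton_left.2 (ha B hB)))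
      refine hL'.insert fun B hB => ?_
      rcases mem_insert.1 hB with rfl | hB
      · simp
      · exact Or.inr (Or.inl ((hLt B hB).2.trans (subset_cons _)))
    · simp only [mem_insert, forall_eq_or_imp]
      refine ⟨by simp, by simp, fun B hB => ⟨(hLt B hB).1, ?_⟩⟩
      exact (hLt B hB).2.trans (subset_cons _)
    · have hsingle : {a} ∉ L := fun h => ha _ h (mem_singleton_self a)
      have hcons : cons a t hat ∉ insert {a} L := by
        rw [mem_insert, not_or]
        refine ⟨fun h => ?_, fun h => ha _ h (mem_cons_self a t)⟩
        have := congrArg card h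
        simp only [card_cons, card_singleton, add_eq_right, card_eq_zero] at this
        exact ht.ne_empty this
      rw [card_insert_of_notMem hcons, card_insert_of_notMem hsingle, hcard, card_cons]
      have := ht.card_pos
      omega

end Laminar

section CrossFree

variable {β : Type*} [BooleanAlgebra β] {x y : β}

def CrossFree (x y : β) : Prop :=
  x ≤ y ∨ y ≤ x ∨ Disjoint x y ∨ Codisjoint x y

theorem CrossFree.symm (h : CrossFree x y) : CrossFree y x := by
  rcases h with h | h | h | h
  exacts [Or.inr (Or.inl h), Or.inl h, Or.inr (Or.inr (Or.inl h.symm)),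
    Or.inr (Or.inr (Or.inr h.symm))]

theorem CrossFree.compl_left (h : CrossFree x y) : CrossFree xᶜ y := by
  rcases h with h | h | h | h
  · exact Or.inr (Or.inr (Or.inr (codisjoint_iff_compl_le_right.2 (by rwa [compl_compl]))))
  · exact Or.inr (Or.inr (Or.inl (disjoint_compl_left_iff.2 h)))
  · exact Or.inr (Or.inl h.le_compl_left)
  · exact Or.inl (codisjoint_iff_compl_le_right.1 h)

theorem CrossFree.compl_right (h : CrossFree x y) : CrossFree x yᶜ :=
  h.symm.compl_left.symm

end CrossFree

theorem isLaminar_of_crossFree {α : Type*} [Fintype α] [DecidableEq α] {a : α}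
    {F : Finset (Finset α)} (ha : ∀ A ∈ F, a ∉ A)
    (hF : ∀ A ∈ F, ∀ B ∈ F, CrossFree A B) : IsLaminar F := by
  intro A hA B hB
  rcases hF A hA B hB with h | h | h | h
  · exact Or.inl h
  · exact Or.inr (Or.inl h)
  · exact Or.inr (Or.inr h)
  · exact absurd (codisjoint_left.1 h (ha A hA)) (ha B hB)

/-- Complementing the members that contain a fixed point `a` gives a laminar family of subsets of
`univ.erase a`. -/
theorem card_le_of_pairwise_crossFree {α : Type*} [Fintype α] [DecidableEq α] [Nonempty α]
    {F : Finset (Finset α)} (hF : ∀ A ∈ F, A.Nonempty ∧ A ≠ univ)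
    (hcross : ∀ A ∈ F, ∀ B ∈ F, A ≠ B → B ≠ Aᶜ ∧ CrossFree A B) :
    #F ≤ 2 * Fintype.card α - 3 := by
  obtain ⟨a⟩ := ‹Nonempty α›
  let f : Finset α → Finset α := fun A => if a ∈ A then Aᶜ else A
  have hf : ∀ A, (a ∈ A ∧ f A = Aᶜ) ∨ (a ∉ A ∧ f A = A) := fun A => by
    by_cases ha : a ∈ A <;> simp [f, ha]
  have hfa : ∀ A, a ∉ f A := fun A => by
    rcases hf A with ⟨ha, hfA⟩ | ⟨ha, hfA⟩ <;> simpa [hfA]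
  have hinj : Set.InjOn f F := by
    intro A hA B hB hAB
    by_contra hne
    rcases hf A with ⟨-, hfA⟩ | ⟨-, hfA⟩ <;>
      rcases hf B with ⟨-, hfB⟩ | ⟨-, hfB⟩ <;> rw [hfA, hfB] at hAB
    · exact hne (compl_injective hAB)
    · exact (hcross A hA B hB hne).1 hAB.symm
    · exact (hcross B hB A hA (Ne.symm hne)).1 hAB
    · exact hne hAB
  have hlam : IsLaminar (F.image f) := by
    refine isLaminar_of_crossFree (a := a) (by simp [hfa]) ?_
    simp only [mem_image]
    rintro _ ⟨A, hA, rfl⟩ _ ⟨B, hB, rfl⟩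
    by_cases hAB : A = B
    · exact Or.inl (hAB ▸ le_rfl)
    have h := (hcross A hA B hB hAB).2
    rcases hf A with ⟨-, hfA⟩ | ⟨-, hfA⟩ <;>
      rcases hf B with ⟨-, hfB⟩ | ⟨-, hfB⟩ <;> rw [hfA, hfB]
    exacts [h.compl_left.compl_right, h.compl_left, h.compl_right, h]
  have hsub : ∀ B ∈ F.image f, B.Nonempty ∧ B ⊆ univ.erase a := by
    simp only [mem_image]
    rintro _ ⟨A, hA, rfl⟩
    refine ⟨?_, fun x hx => mem_erase.2 ⟨fun h => hfa A (h ▸ hx), mem_univ x⟩⟩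
    rcases hf A with ⟨-, hfA⟩ | ⟨-, hfA⟩ <;> rw [hfA]
    exacts [nonempty_iff_ne_empty.2 (mt (compl_eq_empty_iff _).1 (hF A hA).2), (hF A hA).1]
  have hbound := hlam.card_le hsub
  rw [card_image_of_injOn hinj, card_erase_of_mem (mem_univ a), card_univ] at hbound
  omega

section InclGraph

variable {n : ℕ}

instance : Fintype (SubVert n) :=
  inferInstanceAs (Fintype {A : Finset (Fin n) // A.Nonempty ∧ A ≠ univ})

instance : DecidableEq (SubVert n) :=
  inferInstanceAs (DecidableEq {A : Finset (Fin n) // A.Nonempty ∧ A ≠ univ})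

theorem card_subVert (hn : n ≠ 0) : Fintype.card (SubVert n) = 2 ^ n - 2 := by
  have hfilter :
      (univ.filter fun A : Finset (Fin n) => A.Nonempty ∧ A ≠ univ) = univ \ {∅, univ} := by
    ext A
    simp [nonempty_iff_ne_empty]
  have hne : (∅ : Finset (Fin n)) ≠ univ :=
    (univ_nonempty_iff.2 ⟨⟨0, by omega⟩⟩).ne_empty.symm
  rw [show Fintype.card (SubVert n) = _ from Fintype.card_subtype _, hfilter, card_univ_sdiff,
    card_pair hne, Fintype.card_finset, Fintype.card_fin]

theorem inclGraph_edist_eq_two {A B : SubVert n} (hAB : ¬A.1 ⊆ B.1) (hBA : ¬B.1 ⊆ A.1)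
    (hc : B.1 ≠ A.1ᶜ) : (inclGraph n).edist A B = 2 := by
  refine edist_eq_two_iff.2 ⟨fun h => hAB (h ▸ subset_rfl), ?_, ?_⟩
  · rintro (h | h)
    exacts [hAB h.subset, hBA h.subset]
  by_cases hdisj : Disjoint A.1 B.1
  · have hunion : A.1 ∪ B.1 ≠ univ := fun h =>
      hc (eq_compl_iff_isCompl.2 ⟨hdisj.symm, codisjoint_iff.2 (sup_comm B.1 A.1 ▸ h)⟩)
    exact ⟨⟨A.1 ∪ B.1, A.2.1.mono subset_union_left, hunion⟩,
      Or.inl (left_lt_sup.2 hBA), Or.inl (right_lt_sup.2 hAB)⟩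
  · have hinter : A.1 ∩ B.1 ≠ univ := fun h =>
      A.2.2 (univ_subset_iff.1 (h.symm.trans_subset inter_subset_left))
    exact ⟨⟨A.1 ∩ B.1, not_disjoint_iff_nonempty_inter.1 hdisj, hinter⟩,
      Or.inr (inf_lt_left.2 hAB), Or.inr (inf_lt_right.2 hBA)⟩

theorem inclGraph_dist_eq_two {A B : SubVert n} (hAB : ¬A.1 ⊆ B.1) (hBA : ¬B.1 ⊆ A.1)
    (hc : B.1 ≠ A.1ᶜ) : (inclGraph n).dist A B = 2 := by
  rw [SimpleGraph.dist, inclGraph_edist_eq_two hAB hBA hc]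
  rfl

/-- Route through the singleton `{b}` of a point `b ∈ B`: it is at distance two from `A` and
strictly below `B`. -/
theorem inclGraph_edist_le_three_of_compl (hn : 3 ≤ n) {A B : SubVert n} (hc : B.1 = A.1ᶜ)
    (hB : 2 ≤ #B.1) : (inclGraph n).edist A B ≤ 3 := by
  obtain ⟨b, hb⟩ := B.2.1
  have hbA : b ∉ A.1 := by simpa [hc] using hb
  have hsingle : ({b} : Finset (Fin n)) ≠ univ := fun h => by
    have := congrArg card h
    simp only [card_singleton, card_univ, Fintype.card_fin] at this
    omega
  let X : SubVert n := ⟨{b}, singleton_nonempty b, hsingle⟩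
  have hAX : (inclGraph n).edist A X = 2 := by
    refine inclGraph_edist_eq_two (fun h => ?_) (by simpa [X] using hbA) ?_
    · obtain ⟨a, ha⟩ := A.2.1
      exact hbA (mem_singleton.1 (h ha) ▸ ha)
    · intro h
      simp only [X, ← hc] at h
      simp [← h] at hB
  have hXB : (inclGraph n).edist X B = 1 := by
    refine edist_eq_one_iff_adj.2 (Or.inl ((singleton_subset_iff.2 hb).ssubset_of_ne fun h => ?_))
    simp [← h] at hB
  calc (inclGraph n).edist A B ≤ (inclGraph n).edist A X + (inclGraph n).edist X B :=
        SimpleGraph.edist_triangle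
    _ = 3 := by rw [hAX, hXB]; rfl

/-- A vertex and its complement have no common neighbour, since a set comparable with both
`A` and `Aᶜ` is empty or everything. -/
theorem inclGraph_dist_eq_three (hn : 3 ≤ n) {A B : SubVert n} (hc : B.1 = A.1ᶜ) :
    (inclGraph n).dist A B = 3 := by
  have hle : (inclGraph n).edist A B ≤ 3 := by
    rcases le_or_gt 2 #B.1 with hB | hB
    · exact inclGraph_edist_le_three_of_compl hn hc hB
    · have hsum := card_add_card_compl A.1
      rw [Fintype.card_fin, ← hc] at hsum
      rw [edist_comm]
      exact inclGraph_edist_le_three_of_compl hn (by rw [hc, compl_compl]) (by omega)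
  have hlt : 2 < (inclGraph n).edist A B := by
    obtain ⟨a, ha⟩ := A.2.1
    have haB : a ∉ B.1 := by simp [hc, ha]
    refine two_lt_edist_iff.2 ⟨fun h => haB (h ▸ ha), ?_, ?_⟩
    · rintro (h | h)
      · exact haB (h.subset ha)
      · exact A.2.2 (compl_le_self.1 (hc ▸ h.subset))
    rw [Set.eq_empty_iff_forall_notMem]
    rintro C ⟨hAC, hBC⟩
    change B.1 ⊂ C.1 ∨ C.1 ⊂ B.1 at hBC
    rw [hc] at hBC
    rcases hAC with hAC | hAC <;> rcases hBC with hBC | hBC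
    · exact C.2.2 (univ_subset_iff.1 ((union_compl A.1).symm.trans_subset
        (union_subset hAC.subset hBC.subset)))
    · exact A.2.1.ne_empty (le_compl_self.1 (hAC.subset.trans hBC.subset))
    · exact A.2.2 (compl_le_self.1 (hBC.subset.trans hAC.subset))
    · exact C.2.1.ne_empty (subset_empty.1 ((subset_inter hAC.subset hBC.subset).trans_eq
        (inter_compl A.1)))
  rw [SimpleGraph.dist, le_antisymm hle (Order.add_one_le_of_lt hlt)]
  rfl

theorem inclGraph_dist_cases (hn : 3 ≤ n) (A B : SubVert n) :
    A = B ∨ (inclGraph n).dist A B = 1 ∨ (inclGraph n).dist A B = 2 ∨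
      (B.1 = A.1ᶜ ∧ (inclGraph n).dist A B = 3) := by
  by_cases hAB : A = B
  · exact Or.inl hAB
  by_cases hadj : (inclGraph n).Adj A B
  · exact Or.inr (Or.inl (dist_eq_one_iff_adj.2 hadj))
  by_cases hc : B.1 = A.1ᶜ
  · exact Or.inr (Or.inr (Or.inr ⟨hc, inclGraph_dist_eq_three hn hc⟩))
  have hne : A.1 ≠ B.1 := fun h => hAB (Subtype.ext h)
  refine Or.inr (Or.inr (Or.inl (inclGraph_dist_eq_two (fun h => ?_) (fun h => ?_) hc)))
  exacts [hadj (Or.inl (h.ssubset_of_ne hne)), hadj (Or.inr (h.ssubset_of_ne hne.symm))]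

/-- For a crossing pair the resolving vertex `w` would have to be the complement of `u` and
comparable with `v`. -/
theorem ne_compl_and_crossFree_of_dist_eq_add (hn : 3 ≤ n) {u v w : SubVert n} (hwv : w ≠ v)
    (h : (inclGraph n).dist w u = (inclGraph n).dist w v + (inclGraph n).dist v u) :
    v.1 ≠ u.1ᶜ ∧ CrossFree u.1 v.1 := by
  have hwv_pos : 1 ≤ (inclGraph n).dist w v := by
    rcases inclGraph_dist_cases hn w v with h | h | h | ⟨-, h⟩
    exacts [absurd h hwv, h.ge, by omega, by omega]
  have hwu : (inclGraph n).dist w u ≤ 2 ∨ (u.1 = w.1ᶜ ∧ (inclGraph n).dist w u = 3) := by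
    rcases inclGraph_dist_cases hn w u with rfl | h | h | h
    exacts [Or.inl (by simp), Or.inl (by omega), Or.inl h.le, Or.inr h]
  have hnc : v.1 ≠ u.1ᶜ := fun hc => by
    have := inclGraph_dist_eq_three hn (eq_compl_comm.1 hc)
    omega
  refine ⟨hnc, ?_⟩
  by_contra hcross
  simp only [CrossFree, not_or] at hcross
  obtain ⟨huv, hvu, hdisj, hcodisj⟩ := hcross
  have hvu_two := inclGraph_dist_eq_two hvu huv fun hc => hdisj (hc ▸ disjoint_compl_left)
  obtain ⟨hwc, -⟩ : u.1 = w.1ᶜ ∧ _ := hwu.resolve_left (by omega)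
  rcases dist_eq_one_iff_adj.1 (show (inclGraph n).dist w v = 1 by omega) with hadj | hadj
  · exact hcodisj (codisjoint_iff_compl_le_right.2 (eq_compl_comm.1 hwc ▸ hadj.subset))
  · exact hdisj (le_compl_iff_disjoint_left.1 (eq_compl_comm.1 hwc ▸ hadj.subset))

theorem IsStrongResolving.card_univ_sdiff_le (hn : 3 ≤ n) {S : Finset (SubVert n)}
    (hS : IsStrongResolving (inclGraph n) S) : #(univ \ S) ≤ 2 * n - 3 := by
  have : NeZero n := ⟨by omega⟩
  have hbound :=
    card_le_of_pairwise_crossFree (F := (univ \ S).image fun u : SubVert n => u.1) ?_ ?_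
  · rwa [card_image_of_injective (f := fun u : SubVert n => u.1) _ fun _ _ => Subtype.ext,
      Fintype.card_fin] at hbound
  · simp only [mem_image]
    rintro _ ⟨u, -, rfl⟩
    exact u.2
  · simp only [mem_image, mem_sdiff, mem_univ, true_and]
    rintro _ ⟨u, hu, rfl⟩ _ ⟨v, hv, rfl⟩ huv
    obtain ⟨w, hw, hres⟩ := hS u v fun h => huv (h ▸ rfl)
    have hwu : w ≠ u := fun h => hu (h ▸ hw)
    have hwv : w ≠ v := fun h => hv (h ▸ hw)
    rcases hres with hres | hres
    · exact ne_compl_and_crossFree_of_dist_eq_add hn hwv hres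
    · obtain ⟨hc, hcross⟩ := ne_compl_and_crossFree_of_dist_eq_add hn hwu hres
      exact ⟨fun h => hc (eq_compl_comm.1 h), hcross.symm⟩

theorem exists_dist_eq_add (hn : 3 ≤ n) {a : Fin n} {u v : SubVert n} (hu : a ∉ u.1)
    (hv : a ∉ v.1) (huv : u.1 ⊂ v.1 ∨ Disjoint u.1 v.1) :
    ∃ w : SubVert n, a ∈ w.1 ∧
      (inclGraph n).dist w v = (inclGraph n).dist w u + (inclGraph n).dist u v := by
  rcases huv with hsub | hdisj
  · obtain ⟨b, hbv, hbu⟩ := exists_of_ssubset hsub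
    have hb : b ∉ insert a u.1 := by
      rw [mem_insert, not_or]
      exact ⟨fun h => hv (h ▸ hbv), hbu⟩
    let w : SubVert n :=
      ⟨insert a u.1, insert_nonempty a u.1, fun h => hb (by rw [h]; exact mem_univ b)⟩
    refine ⟨w, mem_insert_self a u.1, ?_⟩
    obtain ⟨x, hx⟩ := u.2.1
    have hwv : (inclGraph n).dist w v = 2 := by
      refine inclGraph_dist_eq_two (fun h => hv (h (mem_insert_self a u.1)))
        (fun h => hb (h hbv)) fun h => ?_
      exact mem_compl.1 (h ▸ hsub.subset hx) (mem_insert_of_mem hx)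
    rw [hwv, dist_eq_one_iff_adj.2 (Or.inr (ssubset_insert hu)),
      dist_eq_one_iff_adj.2 (Or.inl hsub)]
  · refine ⟨complVert v, mem_compl.2 hv, ?_⟩
    have hwu : u.1 ⊂ (complVert v).1 :=
      hdisj.le_compl_right.ssubset_of_ne fun h => hu (h ▸ mem_compl.2 hv)
    obtain ⟨x, hx⟩ := u.2.1
    obtain ⟨y, hy⟩ := v.2.1
    have huv : (inclGraph n).dist u v = 2 :=
      inclGraph_dist_eq_two (fun h => disjoint_left.1 hdisj hx (h hx))
        (fun h => disjoint_left.1 hdisj (h hy) hy) fun h => hv (h ▸ mem_compl.2 hu)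
    rw [inclGraph_dist_eq_three hn (compl_compl v.1).symm, dist_eq_one_iff_adj.2 (Or.inr hwu),
      huv]

theorem isStrongResolving_univ_sdiff (hn : 3 ≤ n) {a : Fin n} {T : Finset (SubVert n)}
    (ha : ∀ u ∈ T, a ∉ u.1)
    (hT : ∀ u ∈ T, ∀ v ∈ T, u.1 ⊆ v.1 ∨ v.1 ⊆ u.1 ∨ Disjoint u.1 v.1) :
    IsStrongResolving (inclGraph n) ↑(univ \ T) := by
  intro u v huv
  by_cases hu : u ∈ T
  swap
  · exact ⟨u, by simp [hu], Or.inr (by simp)⟩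
  by_cases hv : v ∈ T
  swap
  · exact ⟨v, by simp [hv], Or.inl (by simp)⟩
  have hne : u.1 ≠ v.1 := fun h => huv (Subtype.ext h)
  have hwT : ∀ w : SubVert n, a ∈ w.1 → w ∈ (↑(univ \ T) : Set (SubVert n)) :=
    fun w hw => by simpa using fun h => ha w h hw
  rcases hT u hu v hv with h | h | h
  · obtain ⟨w, hw, hres⟩ :=
      exists_dist_eq_add hn (ha u hu) (ha v hv) (Or.inl (h.ssubset_of_ne hne))
    exact ⟨w, hwT w hw, Or.inr hres⟩
  · obtain ⟨w, hw, hres⟩ :=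
      exists_dist_eq_add hn (ha v hv) (ha u hu) (Or.inl (h.ssubset_of_ne hne.symm))
    exact ⟨w, hwT w hw, Or.inl hres⟩
  · obtain ⟨w, hw, hres⟩ := exists_dist_eq_add hn (ha v hv) (ha u hu) (Or.inr h.symm)
    exact ⟨w, hwT w hw, Or.inl hres⟩

theorem exists_laminar_family_avoiding (hn : 3 ≤ n) :
    ∃ (a : Fin n) (T : Finset (SubVert n)), #T = 2 * n - 3 ∧ (∀ u ∈ T, a ∉ u.1) ∧
      ∀ u ∈ T, ∀ v ∈ T, u.1 ⊆ v.1 ∨ v.1 ⊆ u.1 ∨ Disjoint u.1 v.1 := by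
  let a : Fin n := ⟨0, by omega⟩
  obtain ⟨L, hL, hLs, hcard⟩ :=
    exists_isLaminar_card_eq (s := univ.erase a) ⟨⟨1, by omega⟩, by simp [a]⟩
  rw [card_erase_of_mem (mem_univ a), card_univ, Fintype.card_fin] at hcard
  have hLa : ∀ A ∈ L, a ∉ A := fun A hA h => by simpa using (hLs A hA).2 h
  let T := L.subtype fun A : Finset (Fin n) => A.Nonempty ∧ A ≠ univ
  have hT : #T = #L := by
    refine (card_subtype _ L).trans (congrArg card (filter_true_of_mem fun A hA => ?_))
    exact ⟨(hLs A hA).1, fun h => hLa A hA (h ▸ mem_univ a)⟩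
  exact ⟨a, T, hT.trans (by omega), fun u hu => hLa u.1 (mem_subtype.1 hu),
    fun u hu v hv => hL u.1 (mem_subtype.1 hu) v.1 (mem_subtype.1 hv)⟩

end InclGraph

theorem stmt12 (n : ℕ) (hn : 3 ≤ n) :
    sdim (inclGraph n) = 2 ^ n - 2 * n + 1 := by
  have hcard := card_subVert (n := n) (by omega)
  have hpow : 2 * n ≤ 2 ^ n := by
    have h := Nat.lt_two_pow_self (n := n - 1)
    rw [show 2 ^ n = 2 * 2 ^ (n - 1) by rw [← pow_succ']; congr 1; omega]
    omega
  refine IsLeast.csInf_eq ⟨?_, ?_⟩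
  · obtain ⟨a, T, hTcard, ha, hT⟩ := exists_laminar_family_avoiding hn
    refine ⟨univ \ T, ?_, isStrongResolving_univ_sdiff hn ha hT⟩
    rw [card_univ_sdiff, hcard, hTcard]
    omega
  · rintro _ ⟨S, rfl, hS⟩
    have hle := hS.card_univ_sdiff_le hn
    rw [card_univ_sdiff, hcard] at hle
    have := card_le_univ S
    omega
end
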